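/- arXiv:2103.02855 — 6 statements merged into one kernel-verified Lean document; each statement's English description precedes it below -/
import Mathlib

section
/- Let Q ∈ St(n, r) = {Q ∈ ℝ^{n×r} : QᵀQ = I_r} be a point of the Stiefel manifold and suppose the index (i₀, j₀) is such that every tangent vector V ∈ T_Q St(n,r) satisfies V_{i₀ j₀} = 0. Then Q_{i₀ j₀} ∈ {+1, −1}. -/
/-!
The tangent space at `Q` contains `Q * Ω` for every skew-symmetric `Ω` and `(1 - Q * Qᵀ) * W` for
every `W`. Taking `W` to be the matrix unit at `(i₀, j₀)` shows that row `i₀` of `Q` has unit norm,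
and taking `Ω = E_{j j₀} - E_{j₀ j}` shows that `Q i₀ j = 0` for `j ≠ j₀`; hence `Q i₀ j₀ ^ 2 = 1`.
-/

open Matrix

namespace Matrix

variable {m n R : Type*} [Fintype m] [Fintype n] [DecidableEq n] [CommRing R]

def IsStiefelTangent (Q V : Matrix m n R) : Prop :=
  Qᵀ * V + Vᵀ * Q = 0

variable {Q : Matrix m n R}

theorem isStiefelTangent_mul_of_transpose_eq_neg (hQ : Qᵀ * Q = 1) {Ω : Matrix n n R}
    (hΩ : Ωᵀ = -Ω) : IsStiefelTangent Q (Q * Ω) := by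
  rw [IsStiefelTangent, ← Matrix.mul_assoc, hQ, Matrix.one_mul, transpose_mul, Matrix.mul_assoc,
    hQ, Matrix.mul_one, hΩ, add_neg_cancel]

theorem isStiefelTangent_one_sub_mul_transpose_mul [DecidableEq m] (hQ : Qᵀ * Q = 1)
    (W : Matrix m n R) :    IsStiefelTangent Q ((1 - Q * Qᵀ) * W) := by
  have hleft : Qᵀ * (1 - Q * Qᵀ) = 0 := by
    rw [Matrix.mul_sub, Matrix.mul_one, ← Matrix.mul_assoc, hQ, Matrix.one_mul, sub_self]
  have hright : (1 - Q * Qᵀ)ᵀ * Q = 0 := by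
    rw [transpose_sub, transpose_one, transpose_mul, transpose_transpose, Matrix.sub_mul,
      Matrix.one_mul, Matrix.mul_assoc, hQ, Matrix.mul_one, sub_self]
  rw [IsStiefelTangent, ← Matrix.mul_assoc, hleft, transpose_mul, Matrix.mul_assoc, hright]
  simp

variable {i₀ : m} {j₀ : n}

theorem mul_transpose_apply_self_eq_one_of_forall_isStiefelTangent [DecidableEq m]
    (hQ : Qᵀ * Q = 1) (h : ∀ V, IsStiefelTangent Q V → V i₀ j₀ = 0) : (Q * Qᵀ) i₀ i₀ = 1 := by
  have hV := h _ (isStiefelTangent_one_sub_mul_transpose_mul hQ (single i₀ j₀ 1))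
  rw [mul_single_apply_same, mul_one, sub_apply, one_apply_eq] at hV
  exact (sub_eq_zero.mp hV).symm

theorem apply_eq_zero_of_forall_isStiefelTangent (hQ : Qᵀ * Q = 1)
    (h : ∀ V, IsStiefelTangent Q V → V i₀ j₀ = 0) {j : n} (hj : j ≠ j₀) : Q i₀ j = 0 := by
  have hΩ : (single j j₀ (1 : R) - single j₀ j 1)ᵀ = -(single j j₀ 1 - single j₀ j 1) := by
    rw [transpose_sub, transpose_single, transpose_single, neg_sub]
  have hV := h _ (isStiefelTangent_mul_of_transpose_eq_neg hQ hΩ)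
  rwa [Matrix.mul_sub, sub_apply, mul_single_apply_same, mul_single_apply_of_ne _ _ _ _ _ hj.symm,
    mul_one, sub_zero] at hV

end Matrix

/-- On the Stiefel manifold `St(n,r)`, if every tangent vector at `Q` vanishes at the
entry `(i₀, j₀)`, then `Q_{i₀ j₀} ∈ {1, -1}`. -/
theorem stmt_8 {n r : ℕ} (Q : Matrix (Fin n) (Fin r) ℝ) (hQ : Qᵀ * Q = 1)
    (i₀ : Fin n) (j₀ : Fin r)
    (h : ∀ V : Matrix (Fin n) (Fin r) ℝ, Qᵀ * V + Vᵀ * Q = 0 → V i₀ j₀ = 0) :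
    Q i₀ j₀ = 1 ∨ Q i₀ j₀ = -1 := by
  have hrow : ∀ j, j ≠ j₀ → Q i₀ j = 0 := fun _ => apply_eq_zero_of_forall_isStiefelTangent hQ h
  have hdiag := mul_transpose_apply_self_eq_one_of_forall_isStiefelTangent hQ h
  rw [mul_apply, Finset.sum_eq_single_of_mem j₀ (Finset.mem_univ _)
    (fun j _ hj => by rw [hrow j hj, zero_mul]), transpose_apply] at hdiag
  exact mul_self_eq_one_iff.mp hdiag
end

section
/- Let H be a self-adjoint linear operator on a finite-dimensional inner product space with 2ω‖v‖² ≤ ⟨Hv, v⟩ ≤ M‖v‖² for all v (with ω, M > 0), let ω' ∈ [0, 1/2], and suppose V satisfies ‖(H + ω'I)V + g‖ ≤ η for some vector g and η ≥ 0. Then ⟨−g, V⟩ ≥ 2ω‖V‖² − η‖V‖, and ‖g‖ ≤ (M + 1)‖V‖ + η. -/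
/-!
Write `r = (H + ω'I)V + g` for the residual, so `-g = (H + ω'I)V - r` with `‖r‖ ≤ η`.
Pairing with `V`, coercivity of `H + ω'I` and Cauchy–Schwarz for `r` give the descent estimate.
For the bound on `‖g‖`, a symmetric operator whose quadratic form is bounded by `M‖v‖²` has
operator norm at most `M` (its norm is the supremum of the Rayleigh quotient), so
`‖H + ω'I‖ ≤ M + 1/2`.
-/

open scoped RealInnerProductSpace

section

variable {E : Type*} [NormedAddCommGroup E] [InnerProductSpace ℝ E]

theorem ContinuousLinearMap.opNorm_le_of_abs_inner_self_le {T : E →L[ℝ] E} (hT : T.IsSymmetric)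
    {M : ℝ} (hM : 0 ≤ M) (h : ∀ x, |⟪T x, x⟫| ≤ M * ‖x‖ ^ 2) : ‖T‖ ≤ M := by
  rw [T.norm_eq_iSup_rayleighQuotient hT]
  refine ciSup_le fun x ↦ ?_
  rw [rayleighQuotient, reApplyInnerSelf_apply, RCLike.re_to_real, abs_div, abs_sq]
  rcases eq_or_ne x 0 with rfl | hx
  · simpa using hM
  · exact div_le_of_le_mul₀ (by positivity) hM (h x)

theorem inner_neg_ge_of_norm_add_le {u g V : E} {η : ℝ} (h : ‖u + g‖ ≤ η) :
    ⟪u, V⟫ - η * ‖V‖ ≤ ⟪-g, V⟫ := by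
  have hr : ⟪u + g, V⟫ ≤ η * ‖V‖ :=
    (real_inner_le_norm _ _).trans (mul_le_mul_of_nonneg_right h (norm_nonneg V))
  rw [inner_add_left] at hr
  rw [inner_neg_left]
  linarith

end

theorem stmt_13_general {E : Type*} [NormedAddCommGroup E] [InnerProductSpace ℝ E]
    (H : E →L[ℝ] E) (hsa : ∀ v w : E, (inner ℝ (H v) w : ℝ) = (inner ℝ v (H w) : ℝ))
    (ω M : ℝ) (hω : 0 < ω) (hM : 0 < M)
    (hlow : ∀ v : E, 2 * ω * ‖v‖ ^ 2 ≤ (inner ℝ (H v) v : ℝ))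
    (hup : ∀ v : E, (inner ℝ (H v) v : ℝ) ≤ M * ‖v‖ ^ 2)
    (ω' : ℝ) (hω'0 : 0 ≤ ω') (hω'1 : ω' ≤ 1 / 2)
    (V g : E) (η : ℝ)
    (hres : ‖H V + ω' • V + g‖ ≤ η) :
    2 * ω * ‖V‖ ^ 2 - η * ‖V‖ ≤ (inner ℝ (-g) V : ℝ) ∧ ‖g‖ ≤ (M + 1) * ‖V‖ + η := by
  set T := H + ω' • ContinuousLinearMap.id ℝ E
  have hTV : T V = H V + ω' • V := rfl
  have hT_coercive : 2 * ω * ‖V‖ ^ 2 ≤ ⟪T V, V⟫ := by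
    rw [hTV, inner_add_left, real_inner_smul_left, real_inner_self_eq_norm_sq]
    nlinarith [hlow V]
  have hH : ‖H‖ ≤ M := H.opNorm_le_of_abs_inner_self_le hsa hM.le fun x ↦
    abs_le.2 ⟨by nlinarith [hlow x, sq_nonneg ‖x‖], hup x⟩
  have hT : ‖T‖ ≤ M + 1 :=
    calc ‖T‖ ≤ ‖H‖ + ‖ω'‖ * ‖ContinuousLinearMap.id ℝ E‖ :=
          (norm_add_le _ _).trans_eq (by rw [norm_smul])
      _ ≤ M + 1 / 2 * 1 := by
            gcongr
            · rwa [Real.norm_of_nonneg hω'0]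
            · exact ContinuousLinearMap.norm_id_le
      _ ≤ M + 1 := by linarith
  rw [← hTV] at hres
  refine ⟨(sub_le_sub_right hT_coercive _).trans (inner_neg_ge_of_norm_add_le hres), ?_⟩
  calc ‖g‖ ≤ ‖T V + g‖ + ‖T V‖ := by simpa using norm_sub_le (T V + g) (T V)
    _ ≤ η + ‖T‖ * ‖V‖ := add_le_add hres (T.le_opNorm V)
    _ ≤ (M + 1) * ‖V‖ + η := by nlinarith [norm_nonneg V]

/-- Inexact regularized Newton estimate: if `‖(H + ω'I)V + g‖ ≤ η` with `H` self-adjoint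
and `2ω‖v‖² ≤ ⟨Hv, v⟩ ≤ M‖v‖²`, then `⟨-g, V⟩ ≥ 2ω‖V‖² - η‖V‖` and
`‖g‖ ≤ (M+1)‖V‖ + η`. -/
theorem stmt_13 {E : Type*} [NormedAddCommGroup E] [InnerProductSpace ℝ E]
    [FiniteDimensional ℝ E]
    (H : E →L[ℝ] E) (hsa : ∀ v w : E, (inner ℝ (H v) w : ℝ) = (inner ℝ v (H w) : ℝ))
    (ω M : ℝ) (hω : 0 < ω) (hM : 0 < M)
    (hlow : ∀ v : E, 2 * ω * ‖v‖ ^ 2 ≤ (inner ℝ (H v) v : ℝ))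
    (hup : ∀ v : E, (inner ℝ (H v) v : ℝ) ≤ M * ‖v‖ ^ 2)
    (ω' : ℝ) (hω'0 : 0 ≤ ω') (hω'1 : ω' ≤ 1 / 2)
    (V g : E) (η : ℝ) (hη : 0 ≤ η)
    (hres : ‖H V + ω' • V + g‖ ≤ η) :
    2 * ω * ‖V‖ ^ 2 - η * ‖V‖ ≤ (inner ℝ (-g) V : ℝ) ∧ ‖g‖ ≤ (M + 1) * ‖V‖ + η :=
  stmt_13_general H hsa ω M hω hM hlow hup ω' hω'0 hω'1 V g η hres
end

section
/- Suppose X : ℝⁿ → ℝⁿ is locally Lipschitz at p, directionally differentiable at p (i.e., the one-sided limit X'(p; v) := lim_{t↓0} (X(p + tv) − X(p))/t exists for every v), and X(p) = 0. Then ‖X(p + v) − X'(p; v)‖ = o(‖v‖) as v → 0. -/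
/-!
On a neighbourhood of `p` where `X` is `K`-Lipschitz, the difference quotients
`u ↦ t⁻¹ • (X (p + t • u) - X p)` are `K`-Lipschitz on any bounded set of directions once `t`
is small, so by Ascoli their pointwise convergence to `X'` is uniform on the unit sphere. Positive
homogeneity of `X'` turns this uniform convergence on the sphere into the `o(‖v‖)` estimate.
-/

open Asymptotics Filter Topology Metric Set

section UniformConvergence

variable {ι α β : Type*} [PseudoMetricSpace α] [PseudoMetricSpace β]

theorem TendstoUniformlyOn.of_eventually_lipschitzOnWith {l : Filter ι} {F : ι → α → β}
    {f : α → β} {s : Set α} {K : NNReal} (hs : IsCompact s)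
    (hF : ∀ᶠ i in l, LipschitzOnWith K (F i) s)
    (hlim : ∀ x ∈ s, Tendsto (F · x) l (𝓝 (f x))) :
    TendstoUniformlyOn F f l s := by
  have : CompactSpace s := isCompact_iff_compactSpace.mp hs
  let G : {i // LipschitzOnWith K (F i) s} → s → β := fun i => s.domRestrict (F i)
  have hG : Equicontinuous G :=
    (LipschitzWith.uniformEquicontinuous G K fun i => i.2.to_restrict).equicontinuous
  have hGlim : Tendsto G (comap (↑) l) (𝓝 (s.domRestrict f)) :=
    tendsto_pi_nhds.2 fun x => (hlim x x.2).comp tendsto_comap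
  have hunif := UniformFun.tendsto_iff_tendstoUniformly.1
    ((hG.tendsto_uniformFun_iff_pi _ _).2 hGlim)
  rw [Metric.tendstoUniformlyOn_iff]
  intro ε hε
  have hε' := Metric.tendstoUniformly_iff.1 hunif ε hε
  filter_upwards [eventually_comap.1 hε', hF] with i hi hLip x hx
  exact hi ⟨i, hLip⟩ rfl ⟨x, hx⟩

end UniformConvergence

section DirectionalDerivative

variable {E F : Type*} [NormedAddCommGroup E] [NormedSpace ℝ E]
  [NormedAddCommGroup F] [NormedSpace ℝ F]

/-- One-sided (`t → 0⁺`) directional derivatives; unlike for `HasLineDerivAt`, `X'` need not be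
linear. -/
def HasDirectionalDerivAt (X X' : E → F) (p : E) : Prop :=
  ∀ v, Tendsto (fun t : ℝ => t⁻¹ • (X (p + t • v) - X p)) (𝓝[>] 0) (𝓝 (X' v))

variable {X X' : E → F} {p : E}

theorem HasDirectionalDerivAt.map_zero (h : HasDirectionalDerivAt X X' p) : X' 0 = 0 :=
  tendsto_nhds_unique (h 0) (by simp)

theorem HasDirectionalDerivAt.map_smul_of_pos (h : HasDirectionalDerivAt X X' p) {c : ℝ}
    (hc : 0 < c) (v : E) : X' (c • v) = c • X' v := by
  have hscale : Tendsto (c * ·) (𝓝[>] (0 : ℝ)) (𝓝[>] 0) := by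
    simpa using TendstoNhdsWithinIoi.const_mul (c := 0) hc tendsto_id
  refine tendsto_nhds_unique (h (c • v)) (((h v).comp hscale).const_smul c |>.congr fun t => ?_)
  simp only [Function.comp_apply, smul_smul, mul_inv, ← mul_assoc, mul_inv_cancel₀ hc.ne',
    one_mul, mul_comm t c]

theorem LipschitzOnWith.lipschitzOnWith_differenceQuotient {K : NNReal} {U s : Set E}
    (hX : LipschitzOnWith K X U) {t : ℝ} (ht : 0 < t) (hs : MapsTo (p + t • ·) s U) :
    LipschitzOnWith K (fun u => t⁻¹ • (X (p + t • u) - X p)) s := by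
  refine LipschitzOnWith.of_dist_le_mul fun u hu w hw => ?_
  calc dist (t⁻¹ • (X (p + t • u) - X p)) (t⁻¹ • (X (p + t • w) - X p))
      = t⁻¹ * dist (X (p + t • u)) (X (p + t • w)) := by
        rw [dist_smul₀, dist_sub_right, Real.norm_of_nonneg (inv_nonneg.2 ht.le)]
    _ ≤ t⁻¹ * (K * dist (p + t • u) (p + t • w)) := by
        gcongr; exact hX.dist_le_mul _ (hs hu) _ (hs hw)
    _ = K * dist u w := by
        rw [dist_add_left, dist_smul₀, Real.norm_of_nonneg ht.le]
        field_simp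

theorem eventually_mapsTo_add_smul {s U : Set E} (hs : Bornology.IsBounded s) (hU : U ∈ 𝓝 p) :
    ∀ᶠ t in 𝓝[>] (0 : ℝ), MapsTo (p + t • ·) s U := by
  obtain ⟨r, hr, hball⟩ := Metric.mem_nhds_iff.1 hU
  obtain ⟨C, hC⟩ := hs.exists_norm_le
  have hlim : Tendsto (· * C) (𝓝 (0 : ℝ)) (𝓝 0) := by
    simpa using (tendsto_id (x := 𝓝 (0 : ℝ))).mul_const C
  have hsmall : ∀ᶠ t in 𝓝 (0 : ℝ), t * C < r := hlim.eventually (gt_mem_nhds hr)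
  filter_upwards [self_mem_nhdsWithin, nhdsWithin_le_nhds hsmall] with t (ht : 0 < t) htC u hu
  refine hball (mem_ball_iff_norm.2 ?_)
  calc ‖p + t • u - p‖ = t * ‖u‖ := by
        rw [add_sub_cancel_left, norm_smul, Real.norm_of_nonneg ht.le]
    _ ≤ t * C := by gcongr; exact hC u hu
    _ < r := htC

theorem HasDirectionalDerivAt.tendstoUniformlyOn {K : NNReal} {U s : Set E}
    (h : HasDirectionalDerivAt X X' p) (hU : U ∈ 𝓝 p) (hX : LipschitzOnWith K X U)
    (hs : IsCompact s) :
    TendstoUniformlyOn (fun (t : ℝ) u => t⁻¹ • (X (p + t • u) - X p)) X' (𝓝[>] 0) s := by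
  refine .of_eventually_lipschitzOnWith (K := K) hs ?_ fun u _ => h u
  filter_upwards [self_mem_nhdsWithin, eventually_mapsTo_add_smul hs.isBounded hU]
    with t ht hmaps
  exact hX.lipschitzOnWith_differenceQuotient ht hmaps

theorem HasDirectionalDerivAt.isLittleO [ProperSpace E] {K : NNReal} {U : Set E}
    (h : HasDirectionalDerivAt X X' p) (hU : U ∈ 𝓝 p) (hX : LipschitzOnWith K X U) :
    (fun v => X (p + v) - X p - X' v) =o[𝓝 0] fun v => v := by
  refine isLittleO_iff.2 fun ε hε => ?_
  have hunif := Metric.tendstoUniformlyOn_iff.1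
    (h.tendstoUniformlyOn hU hX (isCompact_sphere 0 1)) ε hε
  filter_upwards [eventually_nhdsWithin_iff.1 (tendsto_norm_nhdsNE_zero.eventually hunif)]
    with v hv
  rcases eq_or_ne v 0 with rfl | hv0
  · simp [h.map_zero]
  set t := ‖v‖
  have ht : 0 < t := norm_pos_iff.2 hv0
  set u := t⁻¹ • v
  have hu : u ∈ sphere 0 1 := by
    rw [mem_sphere_zero_iff_norm, norm_smul, norm_inv, norm_norm, inv_mul_cancel₀ ht.ne']
  have hsplit : X (p + v) - X p - X' v = -(t • (X' u - t⁻¹ • (X (p + t • u) - X p))) := by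
    rw [smul_sub, smul_inv_smul₀ ht.ne', ← h.map_smul_of_pos ht, smul_inv_smul₀ ht.ne']
    abel
  rw [hsplit, norm_neg, norm_smul, Real.norm_of_nonneg ht.le, ← dist_eq_norm, mul_comm]
  exact mul_le_mul_of_nonneg_right (hv hv0 u hu).le ht.le

end DirectionalDerivative

/-- B-differentiability at a zero: if `X` is locally Lipschitz at `p`, directionally
differentiable at `p`, and `X p = 0`, then `‖X(p+v) - X'(p; v)‖ = o(‖v‖)` as `v → 0`. -/
theorem stmt_14 {n : ℕ} (X : EuclideanSpace ℝ (Fin n) → EuclideanSpace ℝ (Fin n))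
    (p : EuclideanSpace ℝ (Fin n))
    (hlip : ∃ (K : NNReal) (U : Set (EuclideanSpace ℝ (Fin n))),
      U ∈ nhds p ∧ LipschitzOnWith K X U)
    (X' : EuclideanSpace ℝ (Fin n) → EuclideanSpace ℝ (Fin n))
    (hdir : ∀ v, Filter.Tendsto (fun t : ℝ => t⁻¹ • (X (p + t • v) - X p))
      (nhdsWithin 0 (Set.Ioi 0)) (nhds (X' v)))
    (hzero : X p = 0) :
    (fun v => X (p + v) - X' v) =o[nhds 0] fun v => v := by
  obtain ⟨K, U, hU, hX⟩ := hlip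
  simpa [hzero] using HasDirectionalDerivAt.isLittleO hdir hU hX
end

section
/- Let {H_k} be a sequence of invertible self-adjoint operators on ℝⁿ with ‖H_k⁻¹‖ ≤ λ, and suppose a sequence p_k → p_* and vectors V_k satisfy (with X : ℝⁿ → ℝⁿ locally Lipschitz, X(p_*) = 0, and the semismooth bound ‖X(p_*) − X(p_k) − H_k(p_* − p_k)‖ ≤ C‖p_k − p_*‖^{1+ν} holding for some ν ∈ (0,1], C > 0): ‖(H_k + ω_k I)V_k + X(p_k)‖ ≤ ‖X(p_k)‖^{1+ν̄}, where ω_k := ‖X(p_k)‖^{ν̄} ≤ 1/2 for ν̄ ∈ (0,1], and H_k + ω_k I also satisfies ‖(H_k + ω_k I)⁻¹‖ ≤ λ. If additionally X is L-Lipschitz near p_*, then ‖V_k − (p_* − p_k)‖ ≤ C'‖p_k − p_*‖^{1+min{ν, ν̄}} for some constant C' depending only on C, L, λ, ν, ν̄. -/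
/-!
Write `e = p_* - p_k` and `G = H_k + ω_k I`. Since `X p_* = 0`,
`G (V_k - e) = (G V_k + X p_k) + (X p_* - X p_k - H_k e) - ω_k e`: the inexact residual, the
semismooth error and the regularization term. With `d = ‖p_k - p_*‖` and `‖X p_k‖ ≤ L d`, these are
at most `L^{1+ν̄} d^{1+ν̄}`, `C d^{1+ν}` and `L^{ν̄} d^{1+ν̄}`, each at most a multiple of
`d^{1+min{ν,ν̄}}` once `d ≤ 1`; applying `G⁻¹`, of norm at most `λ`, gives the estimate.
-/

theorem ContinuousLinearMap.norm_le_mul_norm_apply_of_comp_eq_id {𝕜 E F : Type*}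
    [NontriviallyNormedField 𝕜] [NormedAddCommGroup E] [NormedSpace 𝕜 E] [NormedAddCommGroup F]
    [NormedSpace 𝕜 F] {G : E →L[𝕜] F} {Ginv : F →L[𝕜] E} {lam : ℝ}
    (hinv : Ginv.comp G = ContinuousLinearMap.id 𝕜 E) (hnorm : ‖Ginv‖ ≤ lam) (v : E) :
    ‖v‖ ≤ lam * ‖G v‖ :=
  calc ‖v‖ = ‖Ginv (G v)‖ := by rw [← ContinuousLinearMap.comp_apply, hinv]; rfl
    _ ≤ ‖Ginv‖ * ‖G v‖ := Ginv.le_opNorm _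
    _ ≤ lam * ‖G v‖ := by gcongr

section NewtonStep

variable {E : Type*} [NormedAddCommGroup E] [NormedSpace ℝ E]

theorem norm_regularized_apply_sub_le (X : E → E) (H : E →L[ℝ] E) {ω : ℝ} (hω : 0 ≤ ω)
    {p pstar : E} (hzero : X pstar = 0) (V : E) :
    ‖(H + ω • ContinuousLinearMap.id ℝ E) (V - (pstar - p))‖ ≤
      ‖H V + ω • V + X p‖ + ‖X pstar - X p - H (pstar - p)‖ + ω * ‖p - pstar‖ := by
  set e := pstar - p
  have hsplit : (H + ω • ContinuousLinearMap.id ℝ E) (V - e) =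
      (H V + ω • V + X p) + (X pstar - X p - H e) - ω • e := by
    simp only [add_apply, smul_apply, ContinuousLinearMap.id_apply, hzero, map_sub]
    abel
  have hωe : ‖ω • e‖ = ω * ‖p - pstar‖ := by
    rw [norm_smul, Real.norm_of_nonneg hω, norm_sub_rev]
  rw [hsplit, ← hωe]
  exact (norm_sub_le _ _).trans (by gcongr; exact norm_add_le _ _)

theorem norm_newton_step_error_le (X : E → E) (H Ginv : E →L[ℝ] E) {p pstar : E}
    (hzero : X pstar = 0) {ν νb lam C L : ℝ} (hν : 0 ≤ ν) (hνb : 0 ≤ νb) (hC : 0 ≤ C)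
    (hL : 0 ≤ L) (hXp : ‖X p‖ ≤ L * ‖p - pstar‖) (hd1 : ‖p - pstar‖ ≤ 1)
    (hGinv : Ginv.comp (H + ‖X p‖ ^ νb • ContinuousLinearMap.id ℝ E) =
      ContinuousLinearMap.id ℝ E)
    (hGnorm : ‖Ginv‖ ≤ lam)
    (hsemi : ‖X pstar - X p - H (pstar - p)‖ ≤ C * ‖p - pstar‖ ^ (1 + ν))
    (V : E) (hres : ‖H V + ‖X p‖ ^ νb • V + X p‖ ≤ ‖X p‖ ^ (1 + νb)) :
    ‖V - (pstar - p)‖ ≤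
      lam * (L ^ (1 + νb) + C + L ^ νb) * ‖p - pstar‖ ^ (1 + min ν νb) := by
  set d := ‖p - pstar‖
  have hlam : 0 ≤ lam := (norm_nonneg _).trans hGnorm
  have hd0 : 0 ≤ d := norm_nonneg _
  have hdecay : ∀ s, min ν νb ≤ s → d ^ (1 + s) ≤ d ^ (1 + min ν νb) := fun s hs =>
    Real.rpow_le_rpow_of_exponent_ge' hd0 hd1 (by positivity) (by linarith)
  have hresidual : ‖X p‖ ^ (1 + νb) ≤ L ^ (1 + νb) * d ^ (1 + min ν νb) :=
    calc ‖X p‖ ^ (1 + νb) ≤ (L * d) ^ (1 + νb) := by gcongr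
      _ = L ^ (1 + νb) * d ^ (1 + νb) := Real.mul_rpow hL hd0
      _ ≤ L ^ (1 + νb) * d ^ (1 + min ν νb) :=
        mul_le_mul_of_nonneg_left (hdecay _ (min_le_right _ _)) (by positivity)
  have hregularization : ‖X p‖ ^ νb * d ≤ L ^ νb * d ^ (1 + min ν νb) :=
    calc ‖X p‖ ^ νb * d ≤ (L * d) ^ νb * d := by gcongr
      _ = L ^ νb * d ^ (1 + νb) := by
        rw [Real.mul_rpow hL hd0, add_comm, Real.rpow_add' hd0 (by positivity), Real.rpow_one,
          mul_assoc]
      _ ≤ L ^ νb * d ^ (1 + min ν νb) :=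
        mul_le_mul_of_nonneg_left (hdecay _ (min_le_right _ _)) (by positivity)
  have hsemi' : C * d ^ (1 + ν) ≤ C * d ^ (1 + min ν νb) :=
    mul_le_mul_of_nonneg_left (hdecay _ (min_le_left _ _)) hC
  calc ‖V - (pstar - p)‖
      ≤ lam * ‖(H + ‖X p‖ ^ νb • ContinuousLinearMap.id ℝ E) (V - (pstar - p))‖ :=
        ContinuousLinearMap.norm_le_mul_norm_apply_of_comp_eq_id hGinv hGnorm _
    _ ≤ lam * (‖X p‖ ^ (1 + νb) + C * d ^ (1 + ν) + ‖X p‖ ^ νb * d) := by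
        gcongr
        exact (norm_regularized_apply_sub_le X H (by positivity) hzero V).trans
          (add_le_add_left (add_le_add hres hsemi) _)
    _ ≤ lam * (L ^ (1 + νb) * d ^ (1 + min ν νb) + C * d ^ (1 + min ν νb) +
          L ^ νb * d ^ (1 + min ν νb)) := by
        gcongr
    _ = lam * (L ^ (1 + νb) + C + L ^ νb) * d ^ (1 + min ν νb) := by ring

end NewtonStep

theorem stmt_16_general {n : ℕ} (X : EuclideanSpace ℝ (Fin n) → EuclideanSpace ℝ (Fin n))
    (pstar : EuclideanSpace ℝ (Fin n)) (hzero : X pstar = 0)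
    (ν νb lam C L : ℝ) (hν : ν ∈ Set.Ioc (0 : ℝ) 1) (hνb : νb ∈ Set.Ioc (0 : ℝ) 1)
    (hlam : 0 < lam) (hC : 0 < C) (hL : 0 < L)
    (ε : ℝ) (hε : 0 < ε)
    (hLip : ∀ x ∈ Metric.ball pstar ε, ∀ y ∈ Metric.ball pstar ε,
      ‖X x - X y‖ ≤ L * ‖x - y‖)
    (p : ℕ → EuclideanSpace ℝ (Fin n))
    (hp : Filter.Tendsto p Filter.atTop (nhds pstar))
    (H : ℕ → EuclideanSpace ℝ (Fin n) →L[ℝ] EuclideanSpace ℝ (Fin n))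
    (ω : ℕ → ℝ) (hω : ∀ k, ω k = ‖X (p k)‖ ^ νb)
    (Ginv : ℕ → EuclideanSpace ℝ (Fin n) →L[ℝ] EuclideanSpace ℝ (Fin n))
    (hGinv : ∀ k,
      (H k + ω k • ContinuousLinearMap.id ℝ _).comp (Ginv k) = ContinuousLinearMap.id ℝ _ ∧
      (Ginv k).comp (H k + ω k • ContinuousLinearMap.id ℝ _) = ContinuousLinearMap.id ℝ _ ∧
      ‖Ginv k‖ ≤ lam)
    (hsemi : ∀ k, ‖X pstar - X (p k) - H k (pstar - p k)‖ ≤ C * ‖p k - pstar‖ ^ (1 + ν))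
    (V : ℕ → EuclideanSpace ℝ (Fin n))
    (hres : ∀ k, ‖H k (V k) + ω k • V k + X (p k)‖ ≤ ‖X (p k)‖ ^ (1 + νb)) :
    ∃ C' > (0 : ℝ), ∀ᶠ k in Filter.atTop,
      ‖V k - (pstar - p k)‖ ≤ C' * ‖p k - pstar‖ ^ (1 + min ν νb) := by
  refine ⟨lam * (L ^ (1 + νb) + C + L ^ νb), by positivity, ?_⟩
  filter_upwards [hp.eventually (Metric.ball_mem_nhds pstar (lt_min hε one_pos))] with k hk
  have hXp : ‖X (p k)‖ ≤ L * ‖p k - pstar‖ := by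
    simpa [hzero] using hLip (p k) (hk.trans_le (min_le_left _ _)) pstar (Metric.mem_ball_self hε)
  rw [dist_eq_norm] at hk
  obtain ⟨-, hleft, hnorm⟩ := hGinv k
  have hresk := hres k
  rw [hω k] at hleft hresk
  exact norm_newton_step_error_le X (H k) (Ginv k) hzero hν.1.le hνb.1.le hC.le hL.le hXp
    (hk.le.trans (min_le_right _ _)) hleft hnorm (hsemi k) (V k) hresk

/-- The inexact regularized semismooth Newton step `V_k` approximates the exact
displacement `p_* - p_k` with error `O(‖p_k - p_*‖^{1+min{ν,ν̄}})`. -/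
theorem stmt_16 {n : ℕ} (X : EuclideanSpace ℝ (Fin n) → EuclideanSpace ℝ (Fin n))
    (pstar : EuclideanSpace ℝ (Fin n)) (hzero : X pstar = 0)
    (ν νb lam C L : ℝ) (hν : ν ∈ Set.Ioc (0 : ℝ) 1) (hνb : νb ∈ Set.Ioc (0 : ℝ) 1)
    (hlam : 0 < lam) (hC : 0 < C) (hL : 0 < L)
    (ε : ℝ) (hε : 0 < ε)
    (hLip : ∀ x ∈ Metric.ball pstar ε, ∀ y ∈ Metric.ball pstar ε,
      ‖X x - X y‖ ≤ L * ‖x - y‖)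
    (p : ℕ → EuclideanSpace ℝ (Fin n))
    (hp : Filter.Tendsto p Filter.atTop (nhds pstar))
    (H : ℕ → EuclideanSpace ℝ (Fin n) →L[ℝ] EuclideanSpace ℝ (Fin n))
    (hsa : ∀ k, ∀ v w, (inner ℝ (H k v) w : ℝ) = (inner ℝ v (H k w) : ℝ))
    (Hinv : ℕ → EuclideanSpace ℝ (Fin n) →L[ℝ] EuclideanSpace ℝ (Fin n))
    (hHinv : ∀ k, (H k).comp (Hinv k) = ContinuousLinearMap.id ℝ _ ∧
      (Hinv k).comp (H k) = ContinuousLinearMap.id ℝ _ ∧ ‖Hinv k‖ ≤ lam)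
    (ω : ℕ → ℝ) (hω : ∀ k, ω k = ‖X (p k)‖ ^ νb) (hωhalf : ∀ k, ω k ≤ 1 / 2)
    (Ginv : ℕ → EuclideanSpace ℝ (Fin n) →L[ℝ] EuclideanSpace ℝ (Fin n))
    (hGinv : ∀ k,
      (H k + ω k • ContinuousLinearMap.id ℝ _).comp (Ginv k) = ContinuousLinearMap.id ℝ _ ∧
      (Ginv k).comp (H k + ω k • ContinuousLinearMap.id ℝ _) = ContinuousLinearMap.id ℝ _ ∧
      ‖Ginv k‖ ≤ lam)
    (hsemi : ∀ k, ‖X pstar - X (p k) - H k (pstar - p k)‖ ≤ C * ‖p k - pstar‖ ^ (1 + ν))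
    (V : ℕ → EuclideanSpace ℝ (Fin n))
    (hres : ∀ k, ‖H k (V k) + ω k • V k + X (p k)‖ ≤ ‖X (p k)‖ ^ (1 + νb)) :
    ∃ C' > (0 : ℝ), ∀ᶠ k in Filter.atTop,
      ‖V k - (pstar - p k)‖ ≤ C' * ‖p k - pstar‖ ^ (1 + min ν νb) :=
  stmt_16_general X pstar hzero ν νb lam C L hν hνb hlam hC hL ε hε hLip p hp H ω hω Ginv hGinv
    hsemi V hres
end

section
/- Let f : [0,1] → ℝ be continuously differentiable with L-Lipschitz derivative f'. Then there exist ξ ∈ (0,1) and a real number M in the Clarke generalized second derivative set ∂²f(ξ) (the convex hull of limits of f''(t_k) over differentiability points t_k → ξ of f') such that f(1) − f(0) = f'(0) + M/2. -/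
/-!
With `A = 2 (f 1 - f 0 - f' 0)`, Rolle's theorem applied to `f t - t f' 0 - A t² / 2` gives
`c ∈ (0, 1)` with `f' c - A c = f' 0`. The Lipschitz function `Φ t = f' t - A t` thus takes
equal values at `0` and `c`, so it has an interior local extremum `ξ`. Near a local maximum, the
fundamental theorem of calculus for Lipschitz functions produces differentiability points of `Φ`
with `Φ' ≥ 0` to the left of `ξ` and with `Φ' ≤ 0` to the right; their derivatives are bounded
by the Lipschitz constant, so subsequences converge, and `0` lies between the two limits.
Hence `0` is in the Clarke derivative of `Φ` at `ξ`, that is, `A` is in `∂² f (ξ)`.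
-/

open Set Filter Topology MeasureTheory Pointwise

theorem AbsolutelyContinuousOnInterval.exists_deriv_nonneg {G : ℝ → ℝ} {a b : ℝ}
    (hG : AbsolutelyContinuousOnInterval G a b) (hab : a < b) (hle : G a ≤ G b) :
    ∃ u ∈ Ioo a b, DifferentiableAt ℝ G u ∧ 0 ≤ deriv G u := by
  by_contra! hneg
  have hae : ∀ᵐ x ∂volume.restrict (Ioc a b), deriv G x < 0 := by
    rw [← Measure.restrict_congr_set Ioo_ae_eq_Ioc, ae_restrict_iff' measurableSet_Ioo]
    filter_upwards [hG.ae_differentiableAt] with x hd hx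
    exact hneg x hx (hd (Ioo_subset_Icc_self.trans Icc_subset_uIcc hx))
  have hlt : ∫ x in a..b, deriv G x < ∫ _ in a..b, (0 : ℝ) := by
    refine intervalIntegral.integral_lt_integral_of_ae_le_of_measure_setOfPred_lt_ne_zero hab.le
      hG.intervalIntegrable_deriv intervalIntegrable_const (hae.mono fun x hx => hx.le) ?_
    rw [measure_congr (ae_eq_univ.2 (ae_iff.1 hae) : {x | deriv G x < 0} =ᵐ[_] univ),
      Measure.restrict_apply_univ]
    simp [hab]
  rw [hG.integral_deriv_eq_sub, intervalIntegral.integral_zero] at hlt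
  linarith

/-- The Bouligand derivative; its convex hull is Clarke's generalized derivative of `G` at `x`. -/
def limitingDerivSet (G : ℝ → ℝ) (x : ℝ) : Set ℝ :=
  {m | ∃ u : ℕ → ℝ, (∀ k, DifferentiableAt ℝ G (u k)) ∧ Tendsto u atTop (𝓝 x) ∧
    Tendsto (fun k => deriv G (u k)) atTop (𝓝 m)}

theorem exists_mem_limitingDerivSet_of_tendsto {G : ℝ → ℝ} {x : ℝ} {S : Set ℝ} {u : ℕ → ℝ}
    (hS : IsCompact S) (hu : Tendsto u atTop (𝓝 x)) (hd : ∀ k, DifferentiableAt ℝ G (u k))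
    (hmem : ∀ k, deriv G (u k) ∈ S) : ∃ m ∈ S, m ∈ limitingDerivSet G x :=
  let ⟨m, hm, φ, hφ, hlim⟩ := hS.tendsto_subseq hmem
  ⟨m, hm, u ∘ φ, fun k => hd (φ k), hu.comp hφ.tendsto_atTop, hlim⟩

theorem limitingDerivSet_neg (G : ℝ → ℝ) (x : ℝ) :
    limitingDerivSet (-G) x = -limitingDerivSet G x := by
  have key : ∀ G : ℝ → ℝ, limitingDerivSet (-G) x ⊆ -limitingDerivSet G x := by
    rintro G m ⟨u, hd, hu, hlim⟩
    refine ⟨u, fun k => differentiableAt_neg_iff.1 (hd k), hu, ?_⟩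
    simpa [deriv.neg'] using hlim.neg
  refine (key G).antisymm fun m hm => ?_
  have := key (-G) (show -m ∈ limitingDerivSet (- -G) x by rwa [neg_neg])
  simpa using this

theorem vadd_limitingDerivSet_subset (G : ℝ → ℝ) (A x : ℝ) :
    A +ᵥ limitingDerivSet G x ⊆ limitingDerivSet (fun t => G t + A * t) x := by
  rintro _ ⟨m, ⟨u, hd, hu, hlim⟩, rfl⟩
  have hlin : ∀ t, HasDerivAt (fun t => A * t) A t := fun t => by
    simpa using (hasDerivAt_id t).const_mul A
  refine ⟨u, fun k => (hd k).add (hlin _).differentiableAt, hu, ?_⟩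
  refine (add_comm m A ▸ hlim.add_const A).congr fun k => ?_
  exact ((hd k).hasDerivAt.add (hlin (u k))).deriv.symm

theorem LipschitzOnWith.exists_nonneg_mem_limitingDerivSet {G : ℝ → ℝ} {K : NNReal} {s : Set ℝ}
    {x : ℝ} {a b : ℕ → ℝ} (hG : LipschitzOnWith K G s) (ha : Tendsto a atTop (𝓝 x))
    (hb : Tendsto b atTop (𝓝 x)) (hab : ∀ k, a k < b k) (hs : ∀ k, Icc (a k) (b k) ⊆ s)
    (hle : ∀ k, G (a k) ≤ G (b k)) : ∃ p ∈ limitingDerivSet G x, 0 ≤ p := by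
  have hac : ∀ k, AbsolutelyContinuousOnInterval G (a k) (b k) := fun k =>
    (hG.mono (uIcc_of_le (hab k).le ▸ hs k)).absolutelyContinuousOnInterval
  choose u hu hd hnonneg using fun k => (hac k).exists_deriv_nonneg (hab k) (hle k)
  have hut : Tendsto u atTop (𝓝 x) :=
    tendsto_of_tendsto_of_tendsto_of_le_of_le ha hb (fun k => (hu k).1.le) (fun k => (hu k).2.le)
  have hbound : ∀ k, |deriv G (u k)| ≤ K := fun k =>
    norm_deriv_le_of_lipschitzOn
      (mem_of_superset (Ioo_mem_nhds (hu k).1 (hu k).2) (Ioo_subset_Icc_self.trans (hs k))) hG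
  obtain ⟨p, hp, hpS⟩ := exists_mem_limitingDerivSet_of_tendsto (S := Icc 0 K) isCompact_Icc hut hd
    fun k => ⟨hnonneg k, (abs_le.1 (hbound k)).2⟩
  exact ⟨p, hpS, hp.1⟩

theorem IsLocalMax.zero_mem_convexHull_limitingDerivSet {G : ℝ → ℝ} {x : ℝ} {s : Set ℝ}
    {K : NNReal} (hG : LipschitzOnWith K G s) (hs : s ∈ 𝓝 x) (hmax : IsLocalMax G x) :
    (0 : ℝ) ∈ convexHull ℝ (limitingDerivSet G x) := by
  obtain ⟨δ, hδ, hnear⟩ := Metric.eventually_nhds_iff.1 (Filter.Eventually.and hs hmax)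
  set ε : ℕ → ℝ := fun k => δ / (k + 2)
  have hε : ∀ k, 0 < ε k ∧ ε k < δ := fun k => by
    refine ⟨by positivity, div_lt_self hδ ?_⟩
    linarith [(k.cast_nonneg : (0 : ℝ) ≤ k)]
  have hε0 : Tendsto ε atTop (𝓝 0) := by
    simpa [ε, add_assoc, one_add_one_eq_two] using
      (tendsto_add_atTop_iff_nat 2).2 (tendsto_const_div_atTop_nhds_zero_nat δ)
  have hIcc : ∀ k, Icc (x - ε k) (x + ε k) ⊆ {y | y ∈ s ∧ G y ≤ G x} := fun k y hy =>
    hnear (by rw [Real.dist_eq, abs_sub_lt_iff]; constructor <;> linarith [hy.1, hy.2, hε k])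
  have hleft : Tendsto (fun k => x - ε k) atTop (𝓝 x) := by
    simpa using tendsto_const_nhds.sub hε0
  have hright : Tendsto (fun k => x + ε k) atTop (𝓝 x) := by
    simpa using tendsto_const_nhds.add hε0
  obtain ⟨p, hpS, hp⟩ := hG.exists_nonneg_mem_limitingDerivSet hleft tendsto_const_nhds
    (fun k => by linarith [hε k])
    (fun k => (Icc_subset_Icc_right (by linarith [hε k])).trans ((hIcc k).trans fun _ h => h.1))
    (fun k => (hIcc k ⟨le_rfl, by linarith [hε k]⟩).2)
  obtain ⟨q, hqS, hq⟩ := (lipschitzOnWith_neg_iff.2 hG).exists_nonneg_mem_limitingDerivSet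
    tendsto_const_nhds hright (fun k => by linarith [hε k])
    (fun k => (Icc_subset_Icc_left (by linarith [hε k])).trans ((hIcc k).trans fun _ h => h.1))
    (fun k => neg_le_neg (hIcc k ⟨by linarith [hε k], le_rfl⟩).2)
  rw [limitingDerivSet_neg, Set.mem_neg] at hqS
  refine segment_subset_convexHull hqS hpS ?_
  rw [segment_eq_Icc (by linarith)]
  exact ⟨by linarith, hp⟩

theorem IsLocalExtr.zero_mem_convexHull_limitingDerivSet {G : ℝ → ℝ} {x : ℝ} {s : Set ℝ}
    {K : NNReal} (hG : LipschitzOnWith K G s) (hs : s ∈ 𝓝 x) (hextr : IsLocalExtr G x) :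
    (0 : ℝ) ∈ convexHull ℝ (limitingDerivSet G x) := by
  rcases hextr with hmin | hmax
  · have hmax : IsLocalMax (-G) x := hmin.neg
    have h := hmax.zero_mem_convexHull_limitingDerivSet (lipschitzOnWith_neg_iff.2 hG) hs
    rw [limitingDerivSet_neg, convexHull_neg] at h
    simpa using h
  · exact IsLocalMax.zero_mem_convexHull_limitingDerivSet hG hs hmax

/-- Lebourg's mean value theorem, in the case of equal values at the endpoints. -/
theorem LipschitzOnWith.exists_zero_mem_convexHull_limitingDerivSet {G : ℝ → ℝ} {K : NNReal}
    {a b : ℝ} (hG : LipschitzOnWith K G (Icc a b)) (hab : a < b) (hGab : G a = G b) :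
    ∃ ξ ∈ Ioo a b, (0 : ℝ) ∈ convexHull ℝ (limitingDerivSet G ξ) :=
  let ⟨ξ, hξ, hextr⟩ := exists_isLocalExtr_Ioo hab hG.continuousOn hGab
  ⟨ξ, hξ, hextr.zero_mem_convexHull_limitingDerivSet hG (Icc_mem_nhds hξ.1 hξ.2)⟩

/-- One-dimensional generalized second-order Taylor theorem: for `f` continuously
differentiable with Lipschitz derivative on `[0,1]`, there are `ξ ∈ (0,1)` and `M` in
the Clarke generalized second derivative set at `ξ` with `f 1 - f 0 = f' 0 + M/2`. -/
theorem stmt_17 (f : ℝ → ℝ) (hf : ContDiff ℝ 1 f) (L : NNReal)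
    (hLip : LipschitzOnWith L (deriv f) (Set.Icc 0 1)) :
    ∃ ξ ∈ Set.Ioo (0 : ℝ) 1, ∃ M ∈ convexHull ℝ
      {mval : ℝ | ∃ u : ℕ → ℝ, (∀ k, DifferentiableAt ℝ (deriv f) (u k)) ∧
        Filter.Tendsto u Filter.atTop (nhds ξ) ∧
        Filter.Tendsto (fun k => deriv (deriv f) (u k)) Filter.atTop (nhds mval)},
      f 1 - f 0 = deriv f 0 + M / 2 := by
  set A := 2 * (f 1 - f 0 - deriv f 0)
  have hfd : Differentiable ℝ f := hf.differentiable one_ne_zero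
  obtain ⟨c, hc, hfc⟩ := exists_hasDerivAt_eq_zero
    (f := fun t => f t - t * deriv f 0 - A * t ^ 2 / 2)
    (f' := fun t => deriv f t - deriv f 0 - A * t) zero_lt_one
    (by have := hfd.continuous; fun_prop) (by ring)
    fun t _ => (((hfd t).hasDerivAt.sub ((hasDerivAt_id' t).mul_const (deriv f 0))).sub
      (((hasDerivAt_pow 2 t).const_mul A).div_const 2)).congr_deriv (by norm_num; ring)
  set Φ := fun t => deriv f t - A * t
  have hΦ : LipschitzOnWith (L + ‖A‖₊) Φ (Icc 0 c) :=
    (hLip.sub (lipschitzWith_smul A).lipschitzOnWith).mono (Icc_subset_Icc_right hc.2.le)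
  obtain ⟨ξ, hξ, h0⟩ := hΦ.exists_zero_mem_convexHull_limitingDerivSet hc.1
    (by simp only [Φ]; linarith)
  refine ⟨ξ, ⟨hξ.1, hξ.2.trans hc.2⟩, A, ?_, by ring⟩
  have hderiv : deriv f = fun t => Φ t + A * t := by ext; simp [Φ]
  show A ∈ convexHull ℝ (limitingDerivSet (deriv f) ξ)
  rw [hderiv]
  refine convexHull_mono (vadd_limitingDerivSet_subset Φ A ξ) ?_
  rw [convexHull_vadd]
  exact ⟨0, h0, add_zero A⟩
end

section
/- Let F : ℝᵈ → ℝ be continuously differentiable with locally Lipschitz gradient, and suppose x_* ∈ ℝᵈ satisfies ∇F(x_*) = 0 and every element of the Clarke generalized Jacobian ∂(∇F)(x_*) is positive definite. Then x_* is a strict local minimum of F; moreover there exist ω > 0 and a neighborhood U of x_* such that F(x) − F(x_*) ≥ ω‖x − x_*‖² for all x ∈ U. -/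
/-!
A compactness argument shows that near `x_*` every derivative `A` of `∇F`, wherever it exists,
satisfies `⟪A v, v⟫ ≥ m ‖v‖²` for a fixed `m > 0`: otherwise a sequence of bad derivatives at points
tending to `x_*` would have a limit in `∂(∇F)(x_*)` that is not positive definite.
Since `∇F` is Lipschitz, Rademacher's theorem and integration along segments then give strong
monotonicity `⟪∇F y - ∇F x, y - x⟫ ≥ m ‖y - x‖²`, and integrating once more from `x_*`, where
`∇F` vanishes, gives `F x - F x_* ≥ m/2 ‖x - x_*‖²`.
-/

open Metric Filter MeasureTheory Set
open scoped Topology NNReal RealInnerProductSpace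

theorem ae_ae_add_smul_notMem {E : Type*} [NormedAddCommGroup E] [NormedSpace ℝ E]
    [MeasurableSpace E] [BorelSpace E] [SecondCountableTopology E]
    {μ : Measure E} [μ.IsAddRightInvariant] [SFinite μ] {N : Set E} (hN : μ N = 0) (w : E) :
    ∀ᵐ q ∂μ, ∀ᵐ t : ℝ, q + t • w ∉ N := by
  have hN' : μ (toMeasurable μ N) = 0 := by rwa [measure_toMeasurable]
  have hmeas : MeasurableSet {p : E × ℝ | p.1 + p.2 • w ∉ toMeasurable μ N} :=
    ((measurableSet_toMeasurable μ N).preimage (by fun_prop)).compl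
  have htranslate : ∀ᵐ t : ℝ, ∀ᵐ q ∂μ, q + t • w ∉ toMeasurable μ N := by
    refine Eventually.of_forall fun t => ?_
    rw [ae_iff]
    simp only [not_not]
    exact (measure_preimage_add_right μ (t • w) _).trans hN'
  filter_upwards [(Measure.ae_ae_comm hmeas).2 htranslate] with q hq
  filter_upwards [hq] with t ht
  exact fun h => ht (subset_toMeasurable μ N h)

theorem LipschitzOnWith.mul_sub_le_sub_of_ae_le_deriv {g : ℝ → ℝ} {a b c : ℝ} {K : ℝ≥0}
    (hab : a ≤ b) (hg : LipschitzOnWith K g (Icc a b))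
    (hc : ∀ᵐ t, t ∈ Icc a b → c ≤ deriv g t) : c * (b - a) ≤ g b - g a := by
  have hac : AbsolutelyContinuousOnInterval g a b :=
    LipschitzOnWith.absolutelyContinuousOnInterval (by rwa [uIcc_of_le hab])
  rw [← hac.integral_deriv_eq_sub, mul_comm, ← smul_eq_mul, ← intervalIntegral.integral_const]
  refine intervalIntegral.integral_mono_ae_restrict hab intervalIntegrable_const
    hac.intervalIntegrable_deriv ?_
  rw [EventuallyLE, ae_restrict_iff' measurableSet_Icc]
  exact hc

/-- The B-subdifferential `∂_B G(x)`; Clarke's generalized Jacobian is its convex hull. -/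
def bouligandJacobian {E F : Type*} [NormedAddCommGroup E] [NormedSpace ℝ E]
    [NormedAddCommGroup F] [NormedSpace ℝ F] (G : E → F) (x : E) : Set (E →L[ℝ] F) :=
  {H | ∃ (u : ℕ → E) (A : ℕ → E →L[ℝ] F), (∀ k, HasFDerivAt G (A k) (u k)) ∧
    Tendsto u atTop (𝓝 x) ∧ Tendsto A atTop (𝓝 H)}

variable {E : Type*} [NormedAddCommGroup E] [InnerProductSpace ℝ E]

theorem ContinuousLinearMap.mul_norm_sq_le_inner_of_norm_eq_one {A : E →L[ℝ] E} {m : ℝ}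
    (h : ∀ v, ‖v‖ = 1 → m ≤ ⟪A v, v⟫) (v : E) : m * ‖v‖ ^ 2 ≤ ⟪A v, v⟫ := by
  rcases eq_or_ne v 0 with rfl | hv
  · simp
  have hnorm : ‖v‖ ≠ 0 := norm_ne_zero_iff.2 hv
  have hunit : ‖‖v‖⁻¹ • v‖ = 1 := by rw [norm_smul, norm_inv, norm_norm, inv_mul_cancel₀ hnorm]
  have := h _ hunit
  rw [map_smul, inner_smul_left, inner_smul_right] at this
  simp only [conj_trivial] at this
  have hpos : 0 < ‖v‖ ^ 2 := by positivity
  calc m * ‖v‖ ^ 2 ≤ ‖v‖⁻¹ * (‖v‖⁻¹ * ⟪A v, v⟫) * ‖v‖ ^ 2 := by gcongr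
    _ = ⟪A v, v⟫ := by field_simp

theorem LipschitzOnWith.exists_pos_eventually_mul_norm_sq_le_inner [FiniteDimensional ℝ E]
    {G : E → E} {x₀ : E} {U : Set E} {K : ℝ≥0} (hG : LipschitzOnWith K G U) (hU : U ∈ 𝓝 x₀)
    (hpd : ∀ H ∈ bouligandJacobian G x₀, ∀ v ≠ 0, 0 < ⟪H v, v⟫) :
    ∃ m > 0, ∀ᶠ y in 𝓝 x₀, ∀ A : E →L[ℝ] E, HasFDerivAt G A y →
      ∀ v, m * ‖v‖ ^ 2 ≤ ⟪A v, v⟫ := by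
  suffices ∃ m > 0, ∀ᶠ y in 𝓝 x₀, ∀ A : E →L[ℝ] E, HasFDerivAt G A y →
      ∀ v, ‖v‖ = 1 → m ≤ ⟪A v, v⟫ by
    obtain ⟨m, hm, h⟩ := this
    exact ⟨m, hm, h.mono fun y hy A hA => A.mul_norm_sq_le_inner_of_norm_eq_one (hy A hA)⟩
  by_contra! hcon
  have hseq : ∀ k : ℕ, ∃ y, (dist y x₀ < 1 / (k + 1) ∧ U ∈ 𝓝 y) ∧
      ∃ A : E →L[ℝ] E, HasFDerivAt G A y ∧ ∃ v, ‖v‖ = 1 ∧ ⟪A v, v⟫ < 1 / (k + 1) := fun k =>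
    (Filter.Eventually.and (ball_mem_nhds x₀ (by positivity)) (eventually_mem_nhds_iff.2 hU)
      |>.and_frequently (hcon _ (by positivity))).exists
  choose y hy A hA v hv hvA using hseq
  have hy_lim : Tendsto y atTop (𝓝 x₀) := tendsto_iff_dist_tendsto_zero.2 <|
    squeeze_zero (fun _ => dist_nonneg) (fun k => (hy k).1.le)
      tendsto_one_div_add_atTop_nhds_zero_nat
  have hbound : ∀ k, (A k, v k) ∈ closedBall (0 : E →L[ℝ] E) K ×ˢ sphere (0 : E) 1 := fun k =>
    ⟨mem_closedBall_zero_iff.2 ((hA k).le_of_lipschitzOn (hy k).2 hG),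
      mem_sphere_zero_iff_norm.2 (hv k)⟩
  obtain ⟨⟨H, w⟩, ⟨-, hw⟩, φ, hφ, hlim⟩ :=
    ((isCompact_closedBall _ _).prod (isCompact_sphere _ _)).tendsto_subseq hbound
  have hH : H ∈ bouligandJacobian G x₀ :=
    ⟨y ∘ φ, A ∘ φ, fun k => hA (φ k), hy_lim.comp hφ.tendsto_atTop,
      (continuous_fst.tendsto _).comp hlim⟩
  have hle : ⟪H w, w⟫ ≤ 0 :=
    le_of_tendsto_of_tendsto'
      ((((continuous_fst.clm_apply continuous_snd).inner continuous_snd).tendsto (H, w)).comp hlim)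
      (tendsto_one_div_add_atTop_nhds_zero_nat.comp hφ.tendsto_atTop) fun k => (hvA (φ k)).le
  exact (hpd H hH w (ne_zero_of_mem_unit_sphere ⟨w, hw⟩)).not_ge hle

theorem LipschitzOnWith.mul_norm_sq_le_inner_sub_of_ae_differentiableAt {G : E → E} {U : Set E}
    {K : ℝ≥0} {m : ℝ} (hG : LipschitzOnWith K G U) (hU : Convex ℝ U)
    (hm : ∀ y ∈ U, ∀ A : E →L[ℝ] E, HasFDerivAt G A y → ∀ v, m * ‖v‖ ^ 2 ≤ ⟪A v, v⟫)
    {q w : E} (hq : q ∈ U) (hqw : q + w ∈ U)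
    (hdiff : ∀ᵐ t : ℝ, t ∈ Icc 0 1 → DifferentiableAt ℝ G (q + t • w)) :
    m * ‖w‖ ^ 2 ≤ ⟪G (q + w) - G q, w⟫ := by
  have hseg : MapsTo (fun t : ℝ => q + t • w) (Icc 0 1) U := fun _ ht => hU.add_smul_mem hq hqw ht
  have hline : LipschitzWith ‖w‖₊ (fun t : ℝ => q + t • w) :=
    LipschitzWith.of_dist_le_mul fun s t => by
      simp [dist_eq_norm, ← sub_smul, norm_smul, mul_comm]
  have hg := (innerSL ℝ w).lipschitz.comp_lipschitzOnWith (hG.comp hline.lipschitzOnWith hseg)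
  have hderiv : ∀ᵐ t : ℝ, t ∈ Icc 0 1 →
      m * ‖w‖ ^ 2 ≤ deriv (fun t : ℝ => ⟪w, G (q + t • w)⟫) t := by
    filter_upwards [hdiff] with t ht htI
    have hline' : HasDerivAt (fun t : ℝ => q + t • w) w t := by
      simpa using ((hasDerivAt_id t).smul_const w).const_add q
    have : HasDerivAt (fun t : ℝ => ⟪w, G (q + t • w)⟫) ⟪w, fderiv ℝ G (q + t • w) w⟫ t := by
      simpa using (hasDerivAt_const t w).inner ℝ ((ht htI).hasFDerivAt.comp_hasDerivAt t hline')
    rw [this.deriv, real_inner_comm]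
    exact hm _ (hseg htI) _ (ht htI).hasFDerivAt w
  have := LipschitzOnWith.mul_sub_le_sub_of_ae_le_deriv zero_le_one hg hderiv
  simpa [inner_sub_right, real_inner_comm w] using this

theorem LipschitzOnWith.mul_norm_sq_le_inner_sub [FiniteDimensional ℝ E] {G : E → E} {U : Set E}
    {K : ℝ≥0} {m : ℝ} (hG : LipschitzOnWith K G U) (hUo : IsOpen U) (hU : Convex ℝ U)
    (hm : ∀ y ∈ U, ∀ A : E →L[ℝ] E, HasFDerivAt G A y → ∀ v, m * ‖v‖ ^ 2 ≤ ⟪A v, v⟫)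
    {x y : E} (hx : x ∈ U) (hy : y ∈ U) :
    m * ‖y - x‖ ^ 2 ≤ ⟪G y - G x, y - x⟫ := by
  borelize E
  let μ : Measure E := Measure.addHaar
  set w := y - x
  have hrademacher : μ {p | p ∈ U ∧ ¬DifferentiableAt ℝ G p} = 0 := by
    refine measure_mono_null ?_ (ae_iff.1 (hG.ae_differentiableWithinAt_of_mem (μ := μ)))
    exact fun p ⟨hpU, hp⟩ hdiff => hp ((hdiff hpU).differentiableAt (hUo.mem_nhds hpU))
  -- The segment `[x, y]` may lie inside the null set where `G` is not differentiable, but by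
  -- Fubini almost every parallel segment meets it in a null set; continuity of `G` then
  -- transfers the inequality from these segments to `[x, y]`.
  have hgood : ∀ᵐ q ∂μ, q ∈ U → q + w ∈ U → m * ‖w‖ ^ 2 ≤ ⟪G (q + w) - G q, w⟫ := by
    filter_upwards [ae_ae_add_smul_notMem hrademacher w] with q hq hqU hqwU
    refine hG.mul_norm_sq_le_inner_sub_of_ae_differentiableAt hU hm hqU hqwU ?_
    filter_upwards [hq] with t ht htI
    by_contra h
    exact ht ⟨hU.add_smul_mem hqU hqwU htI, h⟩
  have hfreq : ∃ᶠ q in 𝓝 x, m * ‖w‖ ^ 2 ≤ ⟪G (q + w) - G q, w⟫ := by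
    intro hbad
    have hV : ∀ᶠ q in 𝓝 x, q ∈ U ∧ q + w ∈ U :=
      Filter.Eventually.and (hUo.mem_nhds hx)
        ((hUo.preimage (continuous_add_const w)).mem_nhds (by simpa [w] using hy))
    refine (Measure.measure_pos_of_mem_nhds μ (hbad.and hV)).ne'
      (measure_mono_null ?_ (ae_iff.1 hgood))
    exact fun q ⟨hq, hqU, hqwU⟩ h => hq (h hqU hqwU)
  have hcont : Tendsto (fun q => ⟪G (q + w) - G q, w⟫) (𝓝 x) (𝓝 ⟪G y - G x, w⟫) := by
    have hGx := hG.continuousOn.continuousAt (hUo.mem_nhds hx)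
    have hGy := hG.continuousOn.continuousAt (hUo.mem_nhds hy)
    have hshift : Tendsto (fun q => q + w) (𝓝 x) (𝓝 y) :=
      (continuous_add_const w).tendsto' x y (by simp [w])
    exact ((hGy.tendsto.comp hshift).sub hGx.tendsto).inner tendsto_const_nhds
  exact isClosed_Ici.mem_of_frequently_of_tendsto hfreq hcont

theorem half_mul_norm_sq_le_sub_of_le_inner_gradient [CompleteSpace E] {F : E → ℝ} {G : E → E}
    {U : Set E} (hU : Convex ℝ U) (hF : ∀ y ∈ U, HasGradientAt F (G y) y) {x₀ : E} (hx₀ : x₀ ∈ U)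
    {m : ℝ} (hG : ∀ y ∈ U, m * ‖y - x₀‖ ^ 2 ≤ ⟪G y, y - x₀⟫) {x : E} (hx : x ∈ U) :
    m / 2 * ‖x - x₀‖ ^ 2 ≤ F x - F x₀ := by
  set u := x - x₀
  have hseg : ∀ t ∈ Icc (0 : ℝ) 1, x₀ + t • u ∈ U := fun t ht =>
    hU.add_smul_mem hx₀ (by simpa [u] using hx) ht
  have hderiv : ∀ t ∈ Icc (0 : ℝ) 1,
      HasDerivAt (fun s : ℝ => F (x₀ + s • u) - m / 2 * s ^ 2 * ‖u‖ ^ 2)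
        (⟪G (x₀ + t • u), u⟫ - m * t * ‖u‖ ^ 2) t := by
    intro t ht
    have hline : HasDerivAt (fun s : ℝ => x₀ + s • u) u t := by
      simpa using ((hasDerivAt_id t).smul_const u).const_add x₀
    have hFt := (hF _ (hseg t ht)).hasFDerivAt.comp_hasDerivAt t hline
    refine (hFt.sub (((hasDerivAt_pow 2 t).const_mul (m / 2)).mul_const (‖u‖ ^ 2))).congr_deriv ?_
    simp only [InnerProductSpace.toDual_apply_apply]
    push_cast
    ring
  have hmono : MonotoneOn (fun s : ℝ => F (x₀ + s • u) - m / 2 * s ^ 2 * ‖u‖ ^ 2) (Icc 0 1) := by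
    refine monotoneOn_of_hasDerivWithinAt_nonneg (convex_Icc 0 1)
      (fun t ht => (hderiv t ht).continuousAt.continuousWithinAt)
      (fun t ht => (hderiv t (interior_subset ht)).hasDerivWithinAt) ?_
    rw [interior_Icc]
    intro t ⟨ht0, ht1⟩
    have h := hG _ (hseg t ⟨ht0.le, ht1.le⟩)
    rw [add_sub_cancel_left, norm_smul, inner_smul_right, Real.norm_of_nonneg ht0.le] at h
    nlinarith
  have := hmono ⟨le_rfl, zero_le_one⟩ ⟨zero_le_one, le_rfl⟩ zero_le_one
  simp only [zero_smul, add_zero, one_smul, u, add_sub_cancel, zero_pow two_ne_zero, one_pow,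
    mul_zero, zero_mul, sub_zero, mul_one] at this
  linarith

/-- Second-order sufficient condition via the Clarke generalized Jacobian of the
gradient: if `∇F(x_*) = 0` and every element of `∂(∇F)(x_*)` is positive definite,
then `x_*` is a strict local minimum with quadratic growth. -/
theorem stmt_18 {d : ℕ} (F : EuclideanSpace ℝ (Fin d) → ℝ)
    (hF : ContDiff ℝ 1 F)
    (hlip : ∀ x : EuclideanSpace ℝ (Fin d),
      ∃ (K : NNReal) (U : Set (EuclideanSpace ℝ (Fin d))),
        U ∈ nhds x ∧ LipschitzOnWith K (fun y => gradient F y) U)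
    (xstar : EuclideanSpace ℝ (Fin d)) (hcrit : gradient F xstar = 0)
    (hpd : ∀ Hm ∈ convexHull ℝ
      {Hb : EuclideanSpace ℝ (Fin d) →L[ℝ] EuclideanSpace ℝ (Fin d) |
        ∃ (u : ℕ → EuclideanSpace ℝ (Fin d))
          (A : ℕ → EuclideanSpace ℝ (Fin d) →L[ℝ] EuclideanSpace ℝ (Fin d)),
          (∀ k, HasFDerivAt (fun y => gradient F y) (A k) (u k)) ∧
          Filter.Tendsto u Filter.atTop (nhds xstar) ∧
          Filter.Tendsto A Filter.atTop (nhds Hb)},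
      ∀ v : EuclideanSpace ℝ (Fin d), v ≠ 0 → 0 < (inner ℝ (Hm v) v : ℝ)) :
    (∃ U ∈ nhds xstar, ∀ x ∈ U, x ≠ xstar → F xstar < F x) ∧
    ∃ ω > (0 : ℝ), ∃ U ∈ nhds xstar, ∀ x ∈ U, ω * ‖x - xstar‖ ^ 2 ≤ F x - F xstar := by
  obtain ⟨K, U, hU, hGU⟩ := hlip xstar
  obtain ⟨m, hm, hcoercive⟩ := hGU.exists_pos_eventually_mul_norm_sq_le_inner hU
    fun H hH => hpd H (subset_convexHull ℝ _ hH)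
  obtain ⟨r, hr, hball⟩ := Metric.eventually_nhds_iff_ball.1 (hcoercive.and hU)
  have hmono : ∀ y ∈ ball xstar r, m * ‖y - xstar‖ ^ 2 ≤ ⟪gradient F y, y - xstar⟫ := by
    intro y hy
    simpa [hcrit] using (hGU.mono fun z hz => (hball z hz).2).mul_norm_sq_le_inner_sub
      isOpen_ball (convex_ball _ _) (fun z hz => (hball z hz).1) (mem_ball_self hr) hy
  have hgrowth : ∀ x ∈ ball xstar r, m / 2 * ‖x - xstar‖ ^ 2 ≤ F x - F xstar := fun x hx =>
    half_mul_norm_sq_le_sub_of_le_inner_gradient (convex_ball _ _)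
      (fun y _ => (hF.differentiable one_ne_zero y).hasGradientAt) (mem_ball_self hr) hmono hx
  refine ⟨⟨ball xstar r, ball_mem_nhds _ hr, fun x hx hne => ?_⟩,
    m / 2, by positivity, ball xstar r, ball_mem_nhds _ hr, hgrowth⟩
  have hpos : 0 < ‖x - xstar‖ := norm_pos_iff.2 (sub_ne_zero.2 hne)
  have : 0 < m / 2 * ‖x - xstar‖ ^ 2 := by positivity
  linarith [hgrowth x hx]
end
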